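/- If I is an Ulrich ideal of R, then I satisfies Condition (C): setting A = I : I, one has A/R ≅ (R/I)^⊕t as R-modules for t = μ_R(I) − 1 > 0, and A = R : I. -/

import Mathlib

set_option synthInstance.maxHeartbeats 1000000
set_option maxHeartbeats 2000000
set_option linter.unnecessarySimpa false

open IsLocalRing Pointwise

section Defs
variable (R : Type*) [CommRing R]

/-- minimal number of generators of a submodule -/
noncomputable def mu {M : Type*} [AddCommGroup M] [Module R M] (N : Submodule R M) : ℕ :=
  sInf {n | ∃ s : Finset M, s.card = n ∧ Submodule.span R (↑s : Set M) = N}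

/-- length of a module, as the Krull dimension of its lattice of submodules -/
noncomputable def rlength (M : Type*) [AddCommGroup M] [Module R M] : WithBot ℕ∞ :=
  Order.krullDim (Submodule R M)

variable (K : Type*) [CommRing K] [Algebra R K]

/-- the image of an ideal in the total ring of fractions `K` -/
noncomputable def toK (I : Ideal R) : Submodule R K :=
  Submodule.map (Algebra.linearMap R K) I

/-- colon of submodules of the total quotient ring: `X : Y = {z | zY ⊆ X}` -/
def qcolon (X Y : Submodule R K) : Submodule R K where
  carrier := {z | ∀ y ∈ Y, z * y ∈ X}
  add_mem' := by
    intro a b ha hb y hy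
    simpa [add_mul] using X.add_mem (ha y hy) (hb y hy)
  zero_mem' := by
    intro y hy; simpa using X.zero_mem
  smul_mem' := by
    intro c a ha y hy
    simpa [smul_mul_assoc] using X.smul_mem c (ha y hy)

/-- `I : I`, viewed as a subalgebra (a birational extension of `R`) of the total
ring of fractions `K`. -/
noncomputable def endAlg (I : Ideal R) : Subalgebra R K where
  carrier := {z | ∀ y ∈ toK R K I, z * y ∈ toK R K I}
  mul_mem' := by
    intro a b ha hb y hy
    rw [mul_assoc]; exact ha _ (hb y hy)
  add_mem' := by
    intro a b ha hb y hy
    simpa [add_mul] using (toK R K I).add_mem (ha y hy) (hb y hy)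
  one_mem' := by intro y hy; simpa using hy
  zero_mem' := by intro y hy; simpa using (toK R K I).zero_mem
  algebraMap_mem' := by
    intro r y hy
    simpa [Algebra.smul_def] using (toK R K I).smul_mem r hy

/-- the socle `{x | m x = 0}` of a module over a local ring (`(⊥).jacobson` is
the maximal ideal of a local ring) -/
def socle (M : Type*) [AddCommGroup M] [Module R M] : Submodule R M where
  carrier := {x | ∀ c ∈ (⊥ : Ideal R).jacobson, c • x = 0}
  add_mem' := by
    intro a b ha hb c hc; rw [smul_add, ha c hc, hb c hc, add_zero]
  zero_mem' := by intro c hc; simp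
  smul_mem' := by
    intro r x hx c hc; rw [smul_comm, hx c hc, smul_zero]

/-- `R` has multiplicity `e`: the Hilbert function of the maximal ideal has
eventual first difference `e`.  (This is the multiplicity of a one-dimensional
Cohen-Macaulay local ring.) -/
noncomputable def HasMult (e : ℕ) : Prop :=
  ∀ᶠ n in Filter.atTop,
    rlength R (R ⧸ ((⊥ : Ideal R).jacobson ^ (n + 1))) =
      rlength R (R ⧸ ((⊥ : Ideal R).jacobson ^ n)) + (e : WithBot ℕ∞)

/-- `R` has Cohen-Macaulay type `r`: for every parameter (a nonzerodivisor in
the maximal ideal), the socle of `R/(a)` has length `r`. -/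
noncomputable def HasCMType (r : ℕ) : Prop :=
  ∀ a : R, a ∈ (⊥ : Ideal R).jacobson → a ∈ nonZeroDivisors R →
    rlength (R ⧸ Ideal.span {a}) (socle (R ⧸ Ideal.span {a}) (R ⧸ Ideal.span {a}))
      = (r : WithBot ℕ∞)

/-- an Artinian local ring is Gorenstein iff its socle is simple -/
noncomputable def IsArtinianGorensteinLocal : Prop :=
  IsArtinianRing R ∧ IsLocalRing R ∧ rlength R (socle R R) = (1 : WithBot ℕ∞)

/-- a one-dimensional Cohen-Macaulay (Noetherian) local ring: local Noetherian
of Krull dimension one with positive depth -/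
class IsOneDimCMLocal : Prop where
  noeth : IsNoetherianRing R
  local_ : IsLocalRing R
  dim_one : ringKrullDim R = 1
  depth_pos : ∃ a : R, a ∈ (⊥ : Ideal R).jacobson ∧ a ∈ nonZeroDivisors R

/-- Ulrich ideal: an `m`-primary ideal with a principal reduction `Q ⊊ I`,
`I² = QI`, and `I/I²` free over `R/I`. -/
def IsUlrich (I : Ideal R) : Prop :=
  I.radical = (⊥ : Ideal R).jacobson ∧ I ≠ ⊤ ∧
  ∃ a ∈ I, Ideal.span {a} ≠ I ∧ I ^ 2 = Ideal.span {a} * I ∧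
    Module.Free (R ⧸ I) I.Cotangent

/-- Condition (C) for an `m`-primary ideal `I`, with the number `t`:
`A/R ≅ (R/I)^t` with `t > 0` and `A = R : I`, where `A = I : I`. -/
def ConditionC (I : Ideal R) (t : ℕ) : Prop :=
  I.radical = (⊥ : Ideal R).jacobson ∧ I ≠ ⊤ ∧ 0 < t ∧
  Nonempty (((qcolon R K (toK R K I) (toK R K I)) ⧸
      (Submodule.comap (qcolon R K (toK R K I) (toK R K I)).subtype (toK R K (⊤ : Ideal R))))
    ≃ₗ[R] (Fin t → R ⧸ I)) ∧
  qcolon R K (toK R K I) (toK R K I) = qcolon R K (toK R K (⊤ : Ideal R)) (toK R K I)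

end Defs

/-!
Since `I² = aI` with `a` a nonzerodivisor, `z ↦ za` identifies `A = I : I` with `I` inside the
total ring of fractions, carrying `R ∩ A` onto `(a)`; so `A/R ≅ I/(a)`. As `I² ⊆ (a)`, this is the
quotient of the free `R/I`-module `I/I²` by the class of `a`, which is part of a basis: otherwise
`a ∈ mI`, and Nakayama applied to `I² = aI ⊆ mI²` would kill `I²`. Hence `A/R ≅ (R/I)^t` with
`t = μ(I) - 1`, and `t > 0` because `I ≠ (a)`. Finally, for `z ∈ R : I` the element `za` lies in
`(a) : I`, the annihilator of `I/(a) ≅ (R/I)^t`, which is `I`; so `z ∈ A`.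
-/

section SpanFinrank

variable {R M : Type*} [CommRing R] [AddCommGroup M] [Module R M]

theorem mu_eq_spanFinrank (N : Submodule R M) : mu R N = N.spanFinrank := by
  rw [Submodule.spanFinrank_eq_iInf, iInf, mu]
  congr 1
  ext n
  exact ⟨fun ⟨s, hs, hN⟩ ↦ ⟨⟨s, hN⟩, hs⟩, fun ⟨s, hs⟩ ↦ ⟨s.1, hs, s.2⟩⟩

theorem Submodule.spanFinrank_top_of_surjective_algebraMap {S : Type*} [CommRing S] [Algebra R S]
    [Module S M] [IsScalarTower R S M] (hsurj : Function.Surjective (algebraMap R S)) :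
    (⊤ : Submodule S M).spanFinrank = (⊤ : Submodule R M).spanFinrank := by
  simp only [Submodule.spanFinrank_eq_iInf]
  refine Equiv.iInf_congr (Equiv.subtypeEquivRight fun s ↦ ?_) fun _ ↦ rfl
  rw [← Submodule.restrictScalars_eq_top_iff R S, Submodule.restrictScalars_span R S hsurj]

theorem Submodule.spanFinrank_top_quotient_smul_top [Module.Finite R M] {J : Ideal R}
    (hJ : J ≤ (⊥ : Ideal R).jacobson) :
    (⊤ : Submodule R (M ⧸ J • (⊤ : Submodule R M))).spanFinrank =
      (⊤ : Submodule R M).spanFinrank := by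
  apply le_antisymm
  · simpa [Submodule.map_top] using
      Submodule.spanFinrank_map_le_of_fg (J • (⊤ : Submodule R M)).mkQ Module.Finite.fg_top
  · obtain ⟨s, hs_card, hs_span⟩ := Submodule.FG.exists_span_set_encard_eq_spanFinrank
      (Module.Finite.fg_top (R := R) (M := M ⧸ J • (⊤ : Submodule R M)))
    obtain ⟨t, ht_inj, ht_image, ht_span⟩ :=
      Submodule.exists_injOn_mkQ_image_span_eq_of_span_eq_map_mkQ_of_le_jacobson_bot s
        Module.Finite.fg_top hJ (by rw [hs_span, Submodule.map_top, Submodule.range_mkQ])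
    have := Submodule.spanFinrank_span_le_encard (R := R) t
    rw [ht_span, ← ht_inj.encard_image, ht_image, hs_card] at this
    exact_mod_cast this

end SpanFinrank

theorem mu_eq_finrank_cotangent {R : Type*} [CommRing R] {I : Ideal R} (hfg : I.FG)
    (hI : I ≤ (⊥ : Ideal R).jacobson) (hItop : I ≠ ⊤) [Module.Free (R ⧸ I) I.Cotangent] :
    mu R I = Module.finrank (R ⧸ I) I.Cotangent := by
  have : Nontrivial (R ⧸ I) := Ideal.Quotient.nontrivial_iff.mpr hItop
  have : Module.Finite R I := Module.Finite.iff_fg.mpr hfg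
  rw [mu_eq_spanFinrank, ← Submodule.spanFinrank_top, Module.finrank_eq_spanFinrank_of_free,
    Submodule.spanFinrank_top_of_surjective_algebraMap (R := R) Ideal.Quotient.mk_surjective]
  exact (Submodule.spanFinrank_top_quotient_smul_top hI).symm

section Unimodular

variable {S : Type*} [CommRing S] {t : ℕ}

/-- For `u = (c j)⁻¹` this is `x ↦ x - (u * x j) • c`, whose `j`-th coordinate vanishes, read in
the other coordinates. -/
def Pi.eliminateAlong (c : Fin (t + 1) → S) (j : Fin (t + 1)) (u : S) :
    (Fin (t + 1) → S) →ₗ[S] (Fin t → S) where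
  toFun x k := x (j.succAbove k) - u * x j * c (j.succAbove k)
  map_add' x y := by funext k; simp only [Pi.add_apply]; ring
  map_smul' r x := by funext k; simp only [Pi.smul_apply, smul_eq_mul, RingHom.id_apply]; ring

theorem Pi.eliminateAlong_surjective (c : Fin (t + 1) → S) (j : Fin (t + 1)) (u : S) :
    Function.Surjective (Pi.eliminateAlong c j u) := fun y ↦
  ⟨Fin.insertNth j 0 y, by funext k; simp [Pi.eliminateAlong]⟩

theorem Pi.ker_eliminateAlong {c : Fin (t + 1) → S} {j : Fin (t + 1)} {u : S}
    (hu : u * c j = 1) : LinearMap.ker (Pi.eliminateAlong c j u) = Submodule.span S {c} := by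
  apply le_antisymm
  · intro x hx
    have hx' (k : Fin t) : x (j.succAbove k) = u * x j * c (j.succAbove k) :=
      sub_eq_zero.mp (congrFun (LinearMap.mem_ker.mp hx) k)
    refine Submodule.mem_span_singleton.mpr ⟨u * x j, funext fun i ↦ ?_⟩
    rcases eq_or_ne i j with rfl | hij
    · simp only [Pi.smul_apply, smul_eq_mul]
      linear_combination x i * hu
    · obtain ⟨k, rfl⟩ := Fin.exists_succAbove_eq hij
      exact (hx' k).symm
  · rw [Submodule.span_le, Set.singleton_subset_iff, SetLike.mem_coe, LinearMap.mem_ker]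
    funext k
    show c (j.succAbove k) - u * c j * c (j.succAbove k) = 0
    rw [hu, one_mul, sub_self]

theorem exists_linearEquiv_quotient_span_singleton [IsLocalRing S] {M : Type*} [AddCommGroup M]
    [Module S M] [Module.Free S M] (hrank : Module.finrank S M = t + 1) {v : M}
    (hv : v ∉ maximalIdeal S • (⊤ : Submodule S M)) :
    Nonempty ((M ⧸ Submodule.span S {v}) ≃ₗ[S] (Fin t → S)) := by
  have : Module.Finite S M := Module.finite_of_finrank_eq_succ hrank
  let e := (Module.finBasisOfFinrankEq S M hrank).equivFun
  obtain ⟨j, hj⟩ : ∃ j, IsUnit (e v j) := by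
    by_contra! h
    refine hv ?_
    rw [← (Module.finBasisOfFinrankEq S M hrank).sum_equivFun v]
    exact Submodule.sum_mem _ fun i _ ↦
      Submodule.smul_mem_smul ((mem_maximalIdeal _).mpr (h i)) trivial
  obtain ⟨u, hu⟩ := hj.exists_left_inv
  let G := Pi.eliminateAlong (e v) j u ∘ₗ e.toLinearMap
  have hker : LinearMap.ker G = Submodule.span S {v} := by
    rw [LinearMap.ker_comp, Pi.ker_eliminateAlong hu, Submodule.comap_equiv_eq_map_symm,
      Submodule.map_span, Set.image_singleton, LinearEquiv.coe_coe, e.symm_apply_apply]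
  exact ⟨(Submodule.quotEquivOfEq _ _ hker.symm).trans <| G.quotKerEquivOfSurjective <|
    (Pi.eliminateAlong_surjective _ j u).comp e.surjective⟩

end Unimodular

section Cotangent

variable {R : Type*} [CommRing R] [IsLocalRing R] {I : Ideal R}

theorem notMem_maximalIdeal_mul_of_sq_eq [IsNoetherianRing R] {a : R} (ha : a ∈ nonZeroDivisors R)
    (haI : a ∈ I) (hsq : I ^ 2 = Ideal.span {a} * I) : a ∉ maximalIdeal R * I := by
  intro h
  have hle : I ^ 2 ≤ maximalIdeal R • I ^ 2 := calc
    I ^ 2 = Ideal.span {a} * I := hsq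
    _ ≤ maximalIdeal R * I * I := Ideal.mul_mono_left ((Ideal.span_singleton_le_iff_mem _).mpr h)
    _ = maximalIdeal R • I ^ 2 := by rw [Ideal.smul_eq_mul, pow_two, mul_assoc]
  have hbot : I ^ 2 = ⊥ := Submodule.eq_bot_of_le_smul_of_le_jacobson_bot _ _
    (IsNoetherian.noetherian _) hle (maximalIdeal_le_jacobson _)
  have : a * a ∈ I ^ 2 := pow_two I ▸ Ideal.mul_mem_mul haI haI
  rw [hbot, Ideal.mem_bot] at this
  exact nonZeroDivisors.ne_zero (mul_mem ha ha) this

theorem toCotangent_notMem_maximalIdeal_smul_top [IsLocalRing (R ⧸ I)] (x : I)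
    (hx : (x : R) ∉ maximalIdeal R * I) :
    I.toCotangent x ∉ maximalIdeal (R ⧸ I) • (⊤ : Submodule (R ⧸ I) I.Cotangent) := by
  intro h
  rw [← map_maximalIdeal_of_surjective _ Ideal.Quotient.mk_surjective,
    ← Submodule.restrictScalars_mem R, ← Ideal.Quotient.algebraMap_eq,
    Submodule.restrictScalars_map_smul_eq, Submodule.restrictScalars_top, ← Submodule.mem_comap,
    Submodule.comap_smul_top_of_surjective _ _ I.toCotangent_surjective] at h
  have hI : I ≠ ⊤ := Ideal.Quotient.nontrivial_iff.mp inferInstance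
  have hxI := Submodule.mem_map_of_mem (f := I.subtype) h
  rw [Submodule.map_sup, Submodule.map_smul'', Submodule.map_subtype_top, Ideal.map_toCotangent_ker,
    Ideal.smul_eq_mul, sup_eq_left.mpr] at hxI
  · exact hx hxI
  · rw [pow_two]
    exact Ideal.mul_mono_left (le_maximalIdeal hI)

end Cotangent

section QuotientSpanSingleton

variable {R : Type*} [CommRing R] {I : Ideal R} {a : R}

theorem Ideal.comap_subtype_span_singleton (haI : a ∈ I) :
    Submodule.comap I.subtype (Ideal.span {a}) = Submodule.span R {(⟨a, haI⟩ : I)} := by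
  ext x
  simp [Submodule.mem_span_singleton, Subtype.ext_iff]

theorem Ideal.annihilator_quotient_span_singleton_eq_colon (haI : a ∈ I) :
    Module.annihilator R (I ⧸ Submodule.span R {(⟨a, haI⟩ : I)}) =
      (Ideal.span {a}).colon (I : Set R) := by
  ext r
  simp [Submodule.annihilator_quotient, Submodule.mem_colon, ← Ideal.comap_subtype_span_singleton]

theorem Ideal.span_singleton_eq_of_subsingleton_quotient (haI : a ∈ I)
    (h : Subsingleton (I ⧸ Submodule.span R {(⟨a, haI⟩ : I)})) : Ideal.span {a} = I := by
  rw [Submodule.Quotient.subsingleton_iff, ← Ideal.comap_subtype_span_singleton,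
    Submodule.comap_subtype_eq_top] at h
  exact le_antisymm ((Ideal.span_singleton_le_iff_mem _).mpr haI) h

theorem Ideal.annihilator_pi_quotient {ι : Type*} [Nonempty ι] :
    Module.annihilator R (ι → R ⧸ I) = I := by
  rw [Module.annihilator_pi, Ideal.annihilator_quotient, iInf_const]

noncomputable def quotientSpanSingletonEquivCotangent (haI : a ∈ I)
    (hI2 : I ^ 2 ≤ Ideal.span {a}) :
    (I ⧸ Submodule.span R {(⟨a, haI⟩ : I)}) ≃ₗ[R]
      I.Cotangent ⧸ Submodule.span (R ⧸ I) {I.toCotangent ⟨a, haI⟩} := by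
  have hle : I • (⊤ : Submodule R I) ≤ Submodule.span R {(⟨a, haI⟩ : I)} := fun x hx ↦ by
    rw [← Ideal.comap_subtype_span_singleton, Submodule.mem_comap]
    exact hI2 <| (I.toCotangent_eq_zero x).mp <| (Submodule.Quotient.mk_eq_zero _).mpr hx
  have hmap : (Submodule.span R {(⟨a, haI⟩ : I)}).map I.toCotangent =
      (Submodule.span (R ⧸ I) {I.toCotangent ⟨a, haI⟩}).restrictScalars R := by
    rw [Submodule.map_span, Set.image_singleton,
      Submodule.restrictScalars_span R (R ⧸ I) Ideal.Quotient.mk_surjective]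
  let e : (I ⧸ Submodule.span R {(⟨a, haI⟩ : I)}) ≃ₗ[R]
      I.Cotangent ⧸ (Submodule.span R {(⟨a, haI⟩ : I)}).map I.toCotangent :=
    (Submodule.quotientQuotientEquivQuotient _ _ hle).symm
  exact e ≪≫ₗ Submodule.quotEquivOfEq _ _ hmap ≪≫ₗ Submodule.Quotient.restrictScalarsEquiv R _

end QuotientSpanSingleton

theorem exists_linearEquiv_quotient_span_singleton_pi {R : Type*} [CommRing R] [IsLocalRing R]
    [IsNoetherianRing R] {I : Ideal R} {a : R} (ha : a ∈ nonZeroDivisors R) (haI : a ∈ I)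
    (hsq : I ^ 2 = Ideal.span {a} * I) (hItop : I ≠ ⊤) [Module.Free (R ⧸ I) I.Cotangent] :
    Nonempty ((I ⧸ Submodule.span R {(⟨a, haI⟩ : I)}) ≃ₗ[R] (Fin (mu R I - 1) → R ⧸ I)) := by
  have : Nontrivial (R ⧸ I) := Ideal.Quotient.nontrivial_iff.mpr hItop
  have : IsLocalRing (R ⧸ I) := .of_surjective' _ Ideal.Quotient.mk_surjective
  have hmu : mu R I ≠ 0 := by
    rw [mu_eq_spanFinrank, Ne, Submodule.spanFinrank_eq_zero_iff_eq_bot (IsNoetherian.noetherian I)]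
    rintro rfl
    exact nonZeroDivisors.ne_zero ha haI
  have hrank : Module.finrank (R ⧸ I) I.Cotangent = mu R I - 1 + 1 := by
    rw [← mu_eq_finrank_cotangent (IsNoetherian.noetherian I)
      ((le_maximalIdeal hItop).trans (maximalIdeal_le_jacobson _)) hItop]
    omega
  obtain ⟨e⟩ := exists_linearEquiv_quotient_span_singleton hrank
    (toCotangent_notMem_maximalIdeal_smul_top ⟨a, haI⟩ <|
      notMem_maximalIdeal_mul_of_sq_eq ha haI hsq)
  exact ⟨quotientSpanSingletonEquivCotangent haI (hsq ▸ Ideal.mul_le_left) ≪≫ₗ e.restrictScalars R⟩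

section Colon

variable {R K : Type*} [CommRing R] [CommRing K] [Algebra R K]

theorem mem_toK {J : Ideal R} {x : K} : x ∈ toK R K J ↔ ∃ r ∈ J, algebraMap R K r = x := by
  simp [toK]

variable [IsFractionRing R K] {I : Ideal R} {a : R}

theorem mem_qcolon_self_iff (ha : a ∈ nonZeroDivisors R) (haI : a ∈ I)
    (hsq : I ^ 2 = Ideal.span {a} * I) {z : K} :
    z ∈ qcolon R K (toK R K I) (toK R K I) ↔ z * algebraMap R K a ∈ toK R K I := by
  refine ⟨fun hz ↦ hz _ (mem_toK.mpr ⟨a, haI, rfl⟩), fun hz y hy ↦ ?_⟩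
  obtain ⟨i, hi, hiz⟩ := mem_toK.mp hz
  obtain ⟨w, hw, rfl⟩ := mem_toK.mp hy
  obtain ⟨v, hv, hav⟩ : ∃ v ∈ I, a * v = i * w :=
    Ideal.mem_span_singleton_mul.mp (hsq ▸ pow_two I ▸ Ideal.mul_mem_mul hi hw)
  refine mem_toK.mpr ⟨v, hv, (IsLocalization.map_units K ⟨a, ha⟩).mul_right_cancel ?_⟩
  rw [← map_mul, mul_comm v, hav, map_mul, hiz]
  ring

variable (K) in
noncomputable def qcolonSelfEquiv (ha : a ∈ nonZeroDivisors R) (haI : a ∈ I)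
    (hsq : I ^ 2 = Ideal.span {a} * I) : qcolon R K (toK R K I) (toK R K I) ≃ₗ[R] I :=
  let f := (LinearMap.mulRight R (algebraMap R K a)).restrict fun _ hz ↦
    (mem_qcolon_self_iff ha haI hsq).mp hz
  have hf : Function.Bijective f := by
    have hunit := IsLocalization.map_units K ⟨a, ha⟩
    refine ⟨fun z z' h ↦ Subtype.ext (hunit.mul_right_cancel (congrArg Subtype.val h)), fun y ↦ ?_⟩
    obtain ⟨u, hu⟩ := hunit.exists_left_inv
    have hy : (y : K) * u * algebraMap R K a = y := by rw [mul_assoc, hu, mul_one]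
    exact ⟨⟨y * u, (mem_qcolon_self_iff ha haI hsq).mpr (hy.symm ▸ y.2)⟩, Subtype.ext hy⟩
  (LinearEquiv.ofBijective f hf).trans
    (Submodule.equivMapOfInjective _ (IsFractionRing.injective R K) I).symm

theorem algebraMap_qcolonSelfEquiv (ha : a ∈ nonZeroDivisors R) (haI : a ∈ I)
    (hsq : I ^ 2 = Ideal.span {a} * I) (z : qcolon R K (toK R K I) (toK R K I)) :
    algebraMap R K (qcolonSelfEquiv K ha haI hsq z) = z * algebraMap R K a :=
  congrArg Subtype.val <| (Submodule.equivMapOfInjective _ (IsFractionRing.injective R K) I)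
    |>.apply_symm_apply ⟨_, (mem_qcolon_self_iff ha haI hsq).mp z.2⟩

theorem comap_qcolonSelfEquiv_span_singleton (ha : a ∈ nonZeroDivisors R) (haI : a ∈ I)
    (hsq : I ^ 2 = Ideal.span {a} * I) :
    (Submodule.span R {(⟨a, haI⟩ : I)}).comap (qcolonSelfEquiv K ha haI hsq).toLinearMap =
      (toK R K (⊤ : Ideal R)).comap (qcolon R K (toK R K I) (toK R K I)).subtype := by
  ext z
  simp only [← Ideal.comap_subtype_span_singleton, Submodule.mem_comap, Submodule.subtype_apply,
    Ideal.mem_span_singleton', mem_toK, Submodule.mem_top, true_and]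
  refine exists_congr fun r ↦ ?_
  rw [← (IsFractionRing.injective R K).eq_iff, map_mul, LinearEquiv.coe_coe,
    algebraMap_qcolonSelfEquiv]
  exact (IsLocalization.map_units K ⟨a, ha⟩).mul_left_inj

variable (K) in
noncomputable def qcolonQuotientEquiv (ha : a ∈ nonZeroDivisors R) (haI : a ∈ I)
    (hsq : I ^ 2 = Ideal.span {a} * I) :
    (qcolon R K (toK R K I) (toK R K I) ⧸
      (toK R K (⊤ : Ideal R)).comap (qcolon R K (toK R K I) (toK R K I)).subtype) ≃ₗ[R]
      I ⧸ Submodule.span R {(⟨a, haI⟩ : I)} :=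
  Submodule.Quotient.equiv _ _ (qcolonSelfEquiv K ha haI hsq) <| by
    rw [← comap_qcolonSelfEquiv_span_singleton ha haI hsq,
      Submodule.map_comap_eq_of_surjective (qcolonSelfEquiv K ha haI hsq).surjective]

theorem qcolon_self_eq_qcolon_top (ha : a ∈ nonZeroDivisors R) (haI : a ∈ I)
    (hsq : I ^ 2 = Ideal.span {a} * I) (hcolon : (Ideal.span {a}).colon (I : Set R) ≤ I) :
    qcolon R K (toK R K I) (toK R K I) = qcolon R K (toK R K ⊤) (toK R K I) := by
  refine le_antisymm (fun z hz y hy ↦ Submodule.map_mono le_top (hz y hy)) fun z hz ↦ ?_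
  obtain ⟨r, -, hr⟩ := mem_toK.mp (hz _ (mem_toK.mpr ⟨a, haI, rfl⟩))
  refine (mem_qcolon_self_iff ha haI hsq).mpr (mem_toK.mpr ⟨r, hcolon ?_, hr⟩)
  refine Submodule.mem_colon.mpr fun x hx ↦ ?_
  obtain ⟨w, -, hw⟩ := mem_toK.mp (hz _ (mem_toK.mpr ⟨x, hx, rfl⟩))
  have : r * x = w * a := IsFractionRing.injective R K <| by
    rw [map_mul, map_mul, hr, hw]
    ring
  exact Ideal.mem_span_singleton'.mpr ⟨w, this.symm⟩

end Colon

theorem IsOneDimCMLocal.exists_mem_nonZeroDivisors {R : Type*} [CommRing R] [IsOneDimCMLocal R]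
    {I : Ideal R} (hrad : I.radical = (⊥ : Ideal R).jacobson) :
    ∃ d ∈ I, d ∈ nonZeroDivisors R := by
  obtain ⟨c, hc, hc_nzd⟩ := IsOneDimCMLocal.depth_pos (R := R)
  obtain ⟨n, hn⟩ := Ideal.mem_radical_iff.mp (hrad ▸ hc)
  exact ⟨c ^ n, hn, pow_mem hc_nzd n⟩

theorem mem_nonZeroDivisors_of_sq_le_span_singleton {R : Type*} [CommRing R] {I : Ideal R} {a : R}
    (hI : ∃ d ∈ I, d ∈ nonZeroDivisors R) (hI2 : I ^ 2 ≤ Ideal.span {a}) :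
    a ∈ nonZeroDivisors R := by
  obtain ⟨d, hdI, hd⟩ := hI
  obtain ⟨r, hr⟩ := Ideal.mem_span_singleton'.mp (hI2 (Ideal.pow_mem_pow hdI 2))
  exact (mul_mem_nonZeroDivisors.mp (hr ▸ pow_mem hd 2)).2

theorem stmt1 (R : Type*) [CommRing R] [IsOneDimCMLocal R]
    (K : Type*) [CommRing K] [Algebra R K] [IsFractionRing R K]
    (I : Ideal R) (hI : IsUlrich R I) :
    ConditionC R K I (mu R I - 1) := by
  obtain ⟨hrad, hItop, a, haI, hne, hsq, hfree⟩ := hI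
  have : IsLocalRing R := IsOneDimCMLocal.local_
  have : IsNoetherianRing R := IsOneDimCMLocal.noeth
  have hI2 : I ^ 2 ≤ Ideal.span {a} := hsq ▸ Ideal.mul_le_left
  have ha := mem_nonZeroDivisors_of_sq_le_span_singleton
    (IsOneDimCMLocal.exists_mem_nonZeroDivisors hrad) hI2
  obtain ⟨eI⟩ := exists_linearEquiv_quotient_span_singleton_pi ha haI hsq hItop
  have ht : 0 < mu R I - 1 := by
    by_contra! h
    have : Subsingleton (Fin (mu R I - 1) → R ⧸ I) := by rw [Nat.le_zero.mp h]; infer_instance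
    exact hne (Ideal.span_singleton_eq_of_subsingleton_quotient haI eI.toEquiv.subsingleton)
  have : Nonempty (Fin (mu R I - 1)) := ⟨⟨0, ht⟩⟩
  have hcolon : (Ideal.span {a}).colon (I : Set R) ≤ I := by
    rw [← Ideal.annihilator_quotient_span_singleton_eq_colon haI, eI.annihilator_eq,
      Ideal.annihilator_pi_quotient]
  exact ⟨hrad, hItop, ht, ⟨qcolonQuotientEquiv K ha haI hsq ≪≫ₗ eI⟩,
    qcolon_self_eq_qcolon_top ha haI hsq hcolon⟩
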